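/- arXiv:2211.04892 — 4 statements merged into one kernel-verified Lean document; each statement's English description precedes it below -/
import Mathlib

section
/- Let z_1, …, z_M be complex numbers with nonpositive real part, Re(z_m) ≤ 0 for every m ∈ {1,…,M}. Then |∏_{m=1}^M 1/(1 − z_m) − ∏_{m=1}^M e^{z_m}| ≤ ∑_{m=1}^M min{2, |1 − z_m − e^{−z_m}|}. -/
/-!
Both products have factors of modulus at most one, so their difference telescopes into at most
the sum of the differences of the factors. Each factor difference is trivially at most `2`, and
the identity `(1 - z)⁻¹ - exp z = -(1 - z)⁻¹ exp z (1 - z - exp (-z))` bounds it by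
`‖1 - z - exp (-z)‖`.
-/

open Finset

theorem Finset.norm_prod_sub_prod_le_sum_norm_sub {ι R : Type*} [NormedCommRing R]
    [NormOneClass R] (s : Finset ι) {f g : ι → R} (hf : ∀ i ∈ s, ‖f i‖ ≤ 1)
    (hg : ∀ i ∈ s, ‖g i‖ ≤ 1) :
    ‖∏ i ∈ s, f i - ∏ i ∈ s, g i‖ ≤ ∑ i ∈ s, ‖f i - g i‖ := by
  classical
  induction s using Finset.induction_on with
  | empty => simp
  | insert a s ha ih =>
    simp only [forall_mem_insert] at hf hg
    have hg_prod : ‖∏ i ∈ s, g i‖ ≤ 1 :=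
      (norm_prod_le s g).trans (prod_le_one (fun _ _ ↦ norm_nonneg _) hg.2)
    rw [prod_insert ha, prod_insert ha, sum_insert ha]
    calc ‖f a * ∏ i ∈ s, f i - g a * ∏ i ∈ s, g i‖
        = ‖f a * (∏ i ∈ s, f i - ∏ i ∈ s, g i) + (f a - g a) * ∏ i ∈ s, g i‖ := by
          congr 1; ring
      _ ≤ ‖f a‖ * ‖∏ i ∈ s, f i - ∏ i ∈ s, g i‖ + ‖f a - g a‖ * ‖∏ i ∈ s, g i‖ :=
        (norm_add_le _ _).trans (add_le_add (norm_mul_le _ _) (norm_mul_le _ _))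
      _ ≤ 1 * ∑ i ∈ s, ‖f i - g i‖ + ‖f a - g a‖ * 1 := by
        gcongr
        exacts [hf.1, ih hf.2 hg.2]
      _ = ‖f a - g a‖ + ∑ i ∈ s, ‖f i - g i‖ := by ring

namespace Complex

theorem norm_exp_le_one_of_re_nonpos {z : ℂ} (hz : z.re ≤ 0) : ‖exp z‖ ≤ 1 := by
  rw [norm_exp]
  exact Real.exp_le_one_iff.mpr hz

theorem one_le_norm_one_sub_of_re_nonpos {z : ℂ} (hz : z.re ≤ 0) : 1 ≤ ‖1 - z‖ :=
  calc (1 : ℝ) ≤ (1 - z).re := by simp; linarith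
    _ ≤ ‖1 - z‖ := re_le_norm _

theorem norm_inv_one_sub_le_one_of_re_nonpos {z : ℂ} (hz : z.re ≤ 0) : ‖(1 - z)⁻¹‖ ≤ 1 := by
  rw [norm_inv]
  exact inv_le_one_of_one_le₀ (one_le_norm_one_sub_of_re_nonpos hz)

theorem inv_one_sub_sub_exp {z : ℂ} (hz : 1 - z ≠ 0) :
    (1 - z)⁻¹ - exp z = -((1 - z)⁻¹ * exp z * (1 - z - exp (-z))) := by
  have h : exp z * exp (-z) = 1 := by rw [← exp_add, add_neg_cancel, exp_zero]
  field_simp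
  linear_combination -h

theorem norm_inv_one_sub_sub_exp_le_min {z : ℂ} (hz : z.re ≤ 0) :
    ‖(1 - z)⁻¹ - exp z‖ ≤ min 2 ‖1 - z - exp (-z)‖ := by
  have hinv := norm_inv_one_sub_le_one_of_re_nonpos hz
  have hexp := norm_exp_le_one_of_re_nonpos hz
  have hne : 1 - z ≠ 0 :=
    norm_pos_iff.mp (one_pos.trans_le (one_le_norm_one_sub_of_re_nonpos hz))
  refine le_min ?_ ?_
  · calc ‖(1 - z)⁻¹ - exp z‖ ≤ ‖(1 - z)⁻¹‖ + ‖exp z‖ := norm_sub_le _ _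
      _ ≤ 2 := by linarith
  · calc ‖(1 - z)⁻¹ - exp z‖ = ‖(1 - z)⁻¹‖ * ‖exp z‖ * ‖1 - z - exp (-z)‖ := by
          rw [inv_one_sub_sub_exp hne, norm_neg, norm_mul, norm_mul]
      _ ≤ 1 * 1 * ‖1 - z - exp (-z)‖ := by gcongr
      _ = ‖1 - z - exp (-z)‖ := by ring

end Complex

/-- Lemma 3 of the paper: if `z_1, …, z_M` are complex numbers with nonpositive real part,
then `|∏ 1/(1 - z_m) - ∏ exp z_m| ≤ ∑ min {2, |1 - z_m - exp (-z_m)|}`. -/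
theorem product_inv_sub_product_exp_bound (M : ℕ) (z : Fin M → ℂ)
    (hz : ∀ m, (z m).re ≤ 0) :
    ‖∏ m, (1 - z m)⁻¹ - ∏ m, Complex.exp (z m)‖ ≤
      ∑ m, min 2 ‖1 - z m - Complex.exp (-z m)‖ :=
  calc ‖∏ m, (1 - z m)⁻¹ - ∏ m, Complex.exp (z m)‖
      ≤ ∑ m, ‖(1 - z m)⁻¹ - Complex.exp (z m)‖ :=
        norm_prod_sub_prod_le_sum_norm_sub _
          (fun m _ ↦ Complex.norm_inv_one_sub_le_one_of_re_nonpos (hz m))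
          (fun m _ ↦ Complex.norm_exp_le_one_of_re_nonpos (hz m))
    _ ≤ ∑ m, min 2 ‖1 - z m - Complex.exp (-z m)‖ :=
        sum_le_sum fun m _ ↦ Complex.norm_inv_one_sub_sub_exp_le_min (hz m)
end

section
/- With Ψ¹(ω) = [∏_{n=1}^N (1 − i σ_v² ω_n / β)^{−M}] · ∏_{m=1}^M (1 − z_m(ω))^{−1} and Ψ̂¹(ω) = [∏_{n=1}^N (1 − i σ_v² ω_n / β)^{−M}] · exp(∑_{m=1}^M z_m(ω)), for every even natural number M ≥ 4 one has ∫_{ℝ^N} |Ψ¹(ω) − Ψ̂¹(ω)| dω ≤ 2M · ( π β (M − 3)!! / (σ_v² (M − 2)!!) )^N, where n!! denotes the double factorial. -/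
/-!
Both characteristic functions carry the factor `∏ₙ (1 - i a ωₙ)^(-M)` with `a = σ_v² / β`, and
every `z_m(ω)` has nonpositive real part, because `Im (ω / (1 - i a ω)) = a ω² / (1 + a² ω²) ≥ 0`.
Hence `|∏ₘ (1 - z_m)⁻¹| ≤ 1` and `|exp (∑ₘ z_m)| ≤ 1`, so the integrand is at most
`2 ∏ₙ (1 + a² ωₙ²)^(-M/2)`. This bound factorises over the coordinates, and the substitution
`a x = tan θ` turns each one-dimensional integral into Wallis' integral
`∫_{-π/2}^{π/2} cos^(M-2) θ dθ = π (M-3)‼ / (M-2)‼`. This gives the bound even without the factor `M`.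
-/

open MeasureTheory Finset Nat Real Set

theorem prod_range_odd_div_even (m : ℕ) :
    ∏ i ∈ range m, (2 * (i : ℝ) + 1) / (2 * i + 2) = ((2 * m - 1)‼ : ℝ) / (2 * m)‼ := by
  induction m with
  | zero => simp
  | succ m ih =>
    have hodd : (2 * (m + 1) - 1)‼ = (2 * m + 1) * (2 * m - 1)‼ := by
      rw [show 2 * (m + 1) - 1 = 2 * m + 1 by omega, Nat.doubleFactorial_add_one]
    have heven : (2 * (m + 1))‼ = (2 * m + 2) * (2 * m)‼ := Nat.doubleFactorial_add_two _
    have hpos : (0 : ℝ) < (2 * m)‼ := by positivity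
    rw [prod_range_succ, ih, hodd, heven]
    push_cast
    field_simp

theorem integral_cos_pow_two_mul_neg_pi_div_two (m : ℕ) :
    ∫ θ in -(π / 2)..π / 2, cos θ ^ (2 * m) = π * (2 * m - 1)‼ / (2 * m)‼ := by
  have hshift := intervalIntegral.integral_comp_add_right (fun x => sin x ^ (2 * m))
    (a := -(π / 2)) (b := π / 2) (π / 2)
  simp only [sin_add_pi_div_two, neg_add_cancel, add_halves] at hshift
  rw [hshift, integral_sin_pow_even, prod_range_odd_div_even, mul_div_assoc]

theorem integral_eq_integral_Ioo_tan {E : Type*} [NormedAddCommGroup E] [NormedSpace ℝ E]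
    (f : ℝ → E) :
    ∫ x, f x = ∫ θ in Ioo (-(π / 2)) (π / 2), (cos θ ^ 2)⁻¹ • f (tan θ) := by
  have hderiv : ∀ θ ∈ Ioo (-(π / 2)) (π / 2),
      HasDerivWithinAt tan (1 / cos θ ^ 2) (Ioo (-(π / 2)) (π / 2)) θ := fun θ hθ =>
    (hasDerivAt_tan (cos_pos_of_mem_Ioo hθ).ne').hasDerivWithinAt
  rw [← setIntegral_univ, ← image_tan_Ioo,
    integral_image_eq_integral_abs_deriv_smul measurableSet_Ioo hderiv injOn_tan]
  refine setIntegral_congr_fun measurableSet_Ioo fun θ _ => ?_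
  rw [abs_of_nonneg (by positivity), one_div]

theorem integrable_inv_one_add_sq_pow_succ (m : ℕ) :
    Integrable fun x : ℝ => ((1 + x ^ 2) ^ (m + 1))⁻¹ := by
  refine integrable_inv_one_add_sq.mono' (by fun_prop) (ae_of_all _ fun x => ?_)
  have h1 : 1 ≤ 1 + x ^ 2 := by nlinarith
  rw [norm_inv, norm_of_nonneg (by positivity)]
  exact inv_anti₀ (by positivity) (le_self_pow₀ h1 (by omega))

theorem integral_inv_one_add_sq_pow_succ (m : ℕ) :
    ∫ x : ℝ, ((1 + x ^ 2) ^ (m + 1))⁻¹ = π * (2 * m - 1)‼ / (2 * m)‼ := by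
  rw [integral_eq_integral_Ioo_tan, ← integral_cos_pow_two_mul_neg_pi_div_two,
    intervalIntegral.integral_of_le (by linarith [pi_pos]), integral_Ioc_eq_integral_Ioo]
  refine setIntegral_congr_fun measurableSet_Ioo fun θ hθ => ?_
  have hcos : cos θ ≠ 0 := (cos_pos_of_mem_Ioo hθ).ne'
  rw [smul_eq_mul, ← inv_pow (1 + tan θ ^ 2), inv_one_add_tan_sq hcos, ← pow_mul, mul_add,
    mul_one, pow_add]
  field_simp

theorem integral_inv_one_add_mul_sq_pow_succ (m : ℕ) (c : ℝ) :
    ∫ x : ℝ, ((1 + (c * x) ^ 2) ^ (m + 1))⁻¹ = |c|⁻¹ * (π * (2 * m - 1)‼ / (2 * m)‼) := by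
  rw [Measure.integral_comp_mul_left (fun x => ((1 + x ^ 2) ^ (m + 1))⁻¹), abs_inv, smul_eq_mul,
    integral_inv_one_add_sq_pow_succ]

theorem norm_one_sub_I_mul_sq (t : ℝ) : ‖1 - Complex.I * t‖ ^ 2 = 1 + t ^ 2 := by
  have h : 1 - Complex.I * t = (1 : ℝ) + (-t : ℝ) * Complex.I := by push_cast; ring
  rw [Complex.sq_norm, h, Complex.normSq_add_mul_I]
  ring

theorem norm_one_sub_I_mul_pow_two_mul (t : ℝ) (k : ℕ) :
    ‖(1 - Complex.I * t) ^ (2 * k)‖ = (1 + t ^ 2) ^ k := by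
  rw [norm_pow, pow_mul, norm_one_sub_I_mul_sq]

theorem im_ofReal_div_one_sub_I_mul_nonneg {x t : ℝ} (h : 0 ≤ x * t) :
    0 ≤ ((x : ℂ) / (1 - Complex.I * t)).im := by
  have := div_nonneg h (Complex.normSq_nonneg (1 - Complex.I * t))
  simpa [Complex.div_im, neg_div] using this

theorem im_sum_ofReal_mul_div_one_sub_I_mul_nonneg {ι : Type*} (s : Finset ι) {c : ℝ}
    (hc : 0 ≤ c) {p : ι → ℝ} (hp : ∀ i ∈ s, 0 ≤ p i) (x : ι → ℝ) :
    0 ≤ (∑ i ∈ s, (p i : ℂ) * x i / (1 - Complex.I * (c * x i : ℝ))).im := by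
  rw [Complex.im_sum]
  refine sum_nonneg fun i hi => ?_
  rw [← Complex.ofReal_mul]
  refine im_ofReal_div_one_sub_I_mul_nonneg ?_
  have := hp i hi
  calc 0 ≤ c * p i * x i ^ 2 := by positivity
    _ = p i * x i * (c * x i) := by ring

theorem re_I_mul_ofReal_mul_nonpos {a : ℝ} (ha : 0 ≤ a) {S : ℂ} (hS : 0 ≤ S.im) :
    (Complex.I * a * S).re ≤ 0 := by
  simpa [Complex.mul_re] using mul_nonneg ha hS

theorem norm_prod_inv_one_sub_le_one {ι : Type*} (s : Finset ι) {z : ι → ℂ}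
    (hz : ∀ i ∈ s, (z i).re ≤ 0) : ‖∏ i ∈ s, (1 - z i)⁻¹‖ ≤ 1 := by
  rw [norm_prod]
  refine prod_le_one (fun _ _ => norm_nonneg _) fun i hi => ?_
  rw [norm_inv]
  refine inv_le_one_of_one_le₀ ((?_ : 1 ≤ (1 - z i).re).trans (Complex.re_le_norm _))
  simpa using hz i hi

theorem norm_exp_sum_le_one {ι : Type*} (s : Finset ι) {z : ι → ℂ}
    (hz : ∀ i ∈ s, (z i).re ≤ 0) : ‖Complex.exp (∑ i ∈ s, z i)‖ ≤ 1 := by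
  rw [Complex.norm_exp, Real.exp_le_one_iff, Complex.re_sum]
  exact sum_nonpos hz

theorem norm_inv_mul_sub_inv_mul_le {𝕜 : Type*} [NormedDivisionRing 𝕜] (d : 𝕜) {p q : 𝕜}
    (hp : ‖p‖ ≤ 1) (hq : ‖q‖ ≤ 1) : ‖d⁻¹ * p - d⁻¹ * q‖ ≤ 2 * ‖d‖⁻¹ := by
  rw [← mul_sub, norm_mul, norm_inv, mul_comm]
  gcongr
  linarith [norm_sub_le p q]

theorem norm_inv_prod_mul_sub_inv_prod_mul_exp_le {ι κ : Type*} [Fintype ι] [Fintype κ]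
    (k : ℕ) {c : ℝ} (hc : 0 ≤ c) {a : κ → ℝ} (ha : ∀ m, 0 ≤ a m) {p : ι → ℝ} (hp : ∀ n, 0 ≤ p n)
    (ω : ι → ℝ) :
    ‖(∏ n, (1 - Complex.I * (c * ω n : ℝ)) ^ (2 * k))⁻¹ *
          ∏ m, (1 - Complex.I * (a m : ℂ) *
            ∑ n, (p n : ℂ) * ω n / (1 - Complex.I * (c * ω n : ℝ)))⁻¹ -
        (∏ n, (1 - Complex.I * (c * ω n : ℝ)) ^ (2 * k))⁻¹ *
          Complex.exp (∑ m, Complex.I * (a m : ℂ) *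
            ∑ n, (p n : ℂ) * ω n / (1 - Complex.I * (c * ω n : ℝ)))‖ ≤
      2 * ∏ n, ((1 + (c * ω n) ^ 2) ^ k)⁻¹ := by
  have hz (m : κ) : (Complex.I * (a m : ℂ) *
      ∑ n, (p n : ℂ) * ω n / (1 - Complex.I * (c * ω n : ℝ))).re ≤ 0 :=
    re_I_mul_ofReal_mul_nonpos (ha m)
      (im_sum_ofReal_mul_div_one_sub_I_mul_nonneg _ hc (fun n _ => hp n) ω)
  refine (norm_inv_mul_sub_inv_mul_le _ (norm_prod_inv_one_sub_le_one _ fun m _ => hz m)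
    (norm_exp_sum_le_one _ fun m _ => hz m)).trans_eq ?_
  simp only [norm_prod, ← prod_inv_distrib, norm_one_sub_I_mul_pow_two_mul]

open MeasureTheory Finset Nat Real in
theorem integral_abs_CF_sub_le_doubleFactorial_general (M N : ℕ) (hM4 : 4 ≤ M) (hMe : Even M)
    (β σv : ℝ) (hβ : 0 < β) (hσv : 0 < σv)
    (lam : Fin M → ℝ) (hlam : ∀ m, 0 ≤ lam m) (h : Fin N → ℂ) :
    (∫ ω : Fin N → ℝ, Norm.norm (
        ((∏ n, (1 - Complex.I * (σv : ℂ) ^ 2 * (ω n : ℂ) / (β : ℂ)) ^ M)⁻¹ *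
          ∏ m, (1 - (Complex.I * (lam m : ℂ) / (β : ℂ)) *
            ∑ n, (‖h n‖ : ℂ) ^ 2 * (ω n : ℂ) /
              (1 - Complex.I * (σv : ℂ) ^ 2 * (ω n : ℂ) / (β : ℂ)))⁻¹)
        - ((∏ n, (1 - Complex.I * (σv : ℂ) ^ 2 * (ω n : ℂ) / (β : ℂ)) ^ M)⁻¹ *
          Complex.exp (∑ m, (Complex.I * (lam m : ℂ) / (β : ℂ)) *
            ∑ n, (‖h n‖ : ℂ) ^ 2 * (ω n : ℂ) /
              (1 - Complex.I * (σv : ℂ) ^ 2 * (ω n : ℂ) / (β : ℂ))))))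
      ≤ 2 * M * (π * β * ((M - 3)‼ : ℝ) / (σv ^ 2 * ((M - 2)‼ : ℝ))) ^ N := by
  obtain ⟨k, rfl⟩ : ∃ k, M = 2 * (k + 1) := by
    obtain ⟨r, hr⟩ := hMe
    exact ⟨r - 1, by omega⟩
  set c := σv ^ 2 / β with hc
  have hc0 : 0 < c := by positivity
  set g : ℝ → ℝ := fun x => ((1 + (c * x) ^ 2) ^ (k + 1))⁻¹
  have hden (x : ℝ) : 1 - Complex.I * (σv : ℂ) ^ 2 * x / β = 1 - Complex.I * (c * x : ℝ) := by
    rw [hc]; push_cast; ring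
  have hcoef (m : Fin (2 * (k + 1))) :
      Complex.I * (lam m : ℂ) / β = Complex.I * (lam m / β : ℝ) := by
    push_cast; ring
  calc _ ≤ ∫ ω : Fin N → ℝ, 2 * ∏ n, g (ω n) := by
        refine integral_mono_of_nonneg (ae_of_all _ fun _ => norm_nonneg _)
          ((Integrable.fintype_prod fun _ =>
            (integrable_inv_one_add_sq_pow_succ k).comp_mul_left' hc0.ne').const_mul 2)
          (ae_of_all _ fun ω => ?_)
        simp only [hden, hcoef]
        simp only [← Complex.ofReal_pow] -- only after `hden`, whose pattern contains `(σv : ℂ) ^ 2`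
        exact norm_inv_prod_mul_sub_inv_prod_mul_exp_le (k + 1) hc0.le
          (fun m => div_nonneg (hlam m) hβ.le) (fun n => sq_nonneg _) ω
    _ = 2 * (∫ x, g x) ^ N := by
        rw [integral_const_mul, volume_pi, integral_fintype_prod_eq_pow, Fintype.card_fin]
    _ = 2 * (π * β * ((2 * (k + 1) - 3)‼ : ℝ) / (σv ^ 2 * ((2 * (k + 1) - 2)‼ : ℝ))) ^ N := by
        rw [integral_inv_one_add_mul_sq_pow_succ, show 2 * (k + 1) - 3 = 2 * k - 1 by omega,
          show 2 * (k + 1) - 2 = 2 * k by omega, abs_of_pos hc0, hc]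
        field_simp
    _ ≤ _ := by
        gcongr
        push_cast
        linarith [k.cast_nonneg (α := ℝ)]

open MeasureTheory Finset Nat Real in
/-- With `Ψ¹, Ψ̂¹` as in the paper and even `M ≥ 4`,
`∫_{ℝ^N} |Ψ¹(ω) - Ψ̂¹(ω)| dω ≤ 2M (π β (M-3)!! / (σ_v² (M-2)!!))^N`. -/
theorem integral_abs_CF_sub_le_doubleFactorial (M N : ℕ) (hM4 : 4 ≤ M) (hMe : Even M)
    (hN : 1 ≤ N) (β σv : ℝ) (hβ : 0 < β) (hσv : 0 < σv)
    (lam : Fin M → ℝ) (hlam : ∀ m, 0 ≤ lam m) (h : Fin N → ℂ) :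
    (∫ ω : Fin N → ℝ, Norm.norm (
        ((∏ n, (1 - Complex.I * (σv : ℂ) ^ 2 * (ω n : ℂ) / (β : ℂ)) ^ M)⁻¹ *
          ∏ m, (1 - (Complex.I * (lam m : ℂ) / (β : ℂ)) *
            ∑ n, (‖h n‖ : ℂ) ^ 2 * (ω n : ℂ) /
              (1 - Complex.I * (σv : ℂ) ^ 2 * (ω n : ℂ) / (β : ℂ)))⁻¹)
        - ((∏ n, (1 - Complex.I * (σv : ℂ) ^ 2 * (ω n : ℂ) / (β : ℂ)) ^ M)⁻¹ *
          Complex.exp (∑ m, (Complex.I * (lam m : ℂ) / (β : ℂ)) *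
            ∑ n, (‖h n‖ : ℂ) ^ 2 * (ω n : ℂ) /
              (1 - Complex.I * (σv : ℂ) ^ 2 * (ω n : ℂ) / (β : ℂ))))))
      ≤ 2 * M * (π * β * ((M - 3)‼ : ℝ) / (σv ^ 2 * ((M - 2)‼ : ℝ))) ^ N :=
  integral_abs_CF_sub_le_doubleFactorial_general M N hM4 hMe β σv hβ hσv lam hlam h
end

section
/- Let b > 0, T ≥ 0, σ² > 0, let M be a natural number with M ≥ 1, and let ω ∈ ℝ. Then ∫_0^∞ (1/σ²) e^{−u/σ²} · exp( i T u ω / (1 − i b ω) ) / (1 − i b ω)^M du = (1 − i b ω)^{−(M−1)} · (1 − i (b + T σ²) ω)^{−1}. -/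
/-!
Under the exponential law of mean `σ2`, `E[e^{c u}] = (1 - σ2 c)⁻¹` whenever `Re c ≤ 0`. Take
`c = iTω / (1 - ibω)`, whose real part `-Tbω² / (1 + b²ω²)` is nonpositive: then
`1 - σ2 c = (1 - i(b + Tσ2)ω) / (1 - ibω)`, which cancels one factor of `(1 - ibω)^M`.
-/

open MeasureTheory Set Complex

lemma one_sub_I_mul_ofReal_ne_zero (t : ℝ) : 1 - I * t ≠ 0 := by
  intro h
  simpa using congrArg re h

lemma re_I_mul_ofReal_div_one_sub_I_mul_ofReal (s t : ℝ) :
    (I * s / (1 - I * t)).re = -(s * t) / (1 + t ^ 2) := by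
  simp [div_re, normSq_apply]
  ring

lemma integral_exponential_density_mul_cexp {σ2 : ℝ} (hσ2 : 0 < σ2) {c : ℂ} (hc : c.re ≤ 0) :
    ∫ u in Ioi (0 : ℝ), ((1 / σ2 * Real.exp (-u / σ2) : ℝ) : ℂ) * cexp (c * u)
      = (1 - σ2 * c)⁻¹ := by
  have hσ2' : (σ2 : ℂ) ≠ 0 := ofReal_ne_zero.mpr hσ2.ne'
  have hre : (c - (σ2 : ℂ)⁻¹).re < 0 := by
    simpa [← ofReal_inv] using hc.trans_lt (inv_pos.mpr hσ2)
  have integrand : ∀ u : ℝ, ((1 / σ2 * Real.exp (-u / σ2) : ℝ) : ℂ) * cexp (c * u)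
      = (σ2 : ℂ)⁻¹ * cexp ((c - (σ2 : ℂ)⁻¹) * u) := by
    intro u
    rw [show (c - (σ2 : ℂ)⁻¹) * u = -u / σ2 + c * u by ring, Complex.exp_add]
    push_cast
    ring
  simp_rw [integrand]
  rw [integral_const_mul, integral_exp_mul_complex_Ioi hre, ofReal_zero, mul_zero, Complex.exp_zero,
    show c - (σ2 : ℂ)⁻¹ = -((1 - σ2 * c) / σ2) by field_simp; ring]
  field_simp

/-- Rayleigh-fading averaging integral (Lemma 2 of the paper): for `b > 0`, `T ≥ 0`,
`σ² > 0`, `M ≥ 1` and `ω ∈ ℝ`,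
`∫_0^∞ (1/σ²) e^{-u/σ²} exp(iTuω/(1 - ibω)) / (1 - ibω)^M du
  = (1 - ibω)^{-(M-1)} (1 - i(b + Tσ²)ω)^{-1}`. -/
theorem integral_rayleigh_average (b T σ2 : ℝ) (hb : 0 < b) (hT : 0 ≤ T)
    (hσ2 : 0 < σ2) (M : ℕ) (hM : 1 ≤ M) (ω : ℝ) :
    ∫ u in Set.Ioi (0 : ℝ),
        ((1 / σ2 * Real.exp (-u / σ2) : ℝ) : ℂ) *
          Complex.exp (Complex.I * (T : ℂ) * (u : ℂ) * (ω : ℂ) /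
            (1 - Complex.I * (b : ℂ) * (ω : ℂ))) /
          (1 - Complex.I * (b : ℂ) * (ω : ℂ)) ^ M
      = ((1 - Complex.I * (b : ℂ) * (ω : ℂ)) ^ (M - 1))⁻¹ *
          (1 - Complex.I * ((b : ℂ) + (T : ℂ) * (σ2 : ℂ)) * (ω : ℂ))⁻¹ := by
  set z : ℂ := 1 - I * b * ω with hz_def
  have hz : z ≠ 0 := by
    simpa [hz_def, mul_assoc] using one_sub_I_mul_ofReal_ne_zero (b * ω)
  have hc : (I * T * ω / z).re ≤ 0 := by
    have := re_I_mul_ofReal_div_one_sub_I_mul_ofReal (T * ω) (b * ω)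
    push_cast at this
    rw [hz_def, mul_assoc, mul_assoc I, this]
    exact div_nonpos_of_nonpos_of_nonneg (by nlinarith [mul_nonneg hT hb.le, sq_nonneg ω])
      (by positivity)
  simp_rw [show ∀ u : ℝ, I * T * u * ω / z = I * T * ω / z * u from fun u => by ring]
  rw [integral_div, integral_exponential_density_mul_cexp hσ2 hc]
  obtain ⟨k, rfl⟩ : ∃ k, M = k + 1 := ⟨M - 1, by omega⟩
  rw [Nat.add_sub_cancel, pow_succ]
  field_simp
  ring
end

section
/- Let h ∈ ℂ^N be a column vector, let Λ = diag(λ_1, …, λ_M) be an M×M diagonal complex matrix, let Ω = diag(ω_1, …, ω_N) be an N×N diagonal complex matrix, and let s ∈ ℂ. Then the determinant of the (NM)×(NM) complex matrix I_{NM} − (h h^H ⊗ Λ)(Ω ⊗ I_M) − s (Ω ⊗ I_M) factorizes as det( I_{NM} − (h h^H ⊗ Λ)(Ω ⊗ I_M) − s (Ω ⊗ I_M) ) = ∏_{m=1}^M det( I_N − s Ω − λ_m h h^H Ω ), where h h^H is the N×N rank-one matrix with entries h_p conj(h_r) and ⊗ denotes the Kronecker product. -/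
open Matrix Kronecker in
/-- Kronecker determinant factorization: for `h ∈ ℂ^N`, `Λ = diag(λ)`, `Ω = diag(ω)`
and `s ∈ ℂ`,
`det(I_{NM} - (h h^H ⊗ Λ)(Ω ⊗ I_M) - s (Ω ⊗ I_M)) = ∏_m det(I_N - s Ω - λ_m h h^H Ω)`. -/
theorem det_kronecker_factorization (N M : ℕ) (h : Fin N → ℂ) (lam : Fin M → ℂ)
    (ω : Fin N → ℂ) (s : ℂ) :
    ((1 : Matrix (Fin N × Fin M) (Fin N × Fin M) ℂ)
        - (Matrix.vecMulVec h (fun r => starRingEnd ℂ (h r)) ⊗ₖ Matrix.diagonal lam) *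
            (Matrix.diagonal ω ⊗ₖ (1 : Matrix (Fin M) (Fin M) ℂ))
        - s • (Matrix.diagonal ω ⊗ₖ (1 : Matrix (Fin M) (Fin M) ℂ))).det
      = ∏ m, ((1 : Matrix (Fin N) (Fin N) ℂ) - s • Matrix.diagonal ω
          - lam m • (Matrix.vecMulVec h (fun r => starRingEnd ℂ (h r)) *
              Matrix.diagonal ω)).det := by
  rw [show ((1 : Matrix (Fin N × Fin M) (Fin N × Fin M) ℂ)
        - (Matrix.vecMulVec h (fun r => starRingEnd ℂ (h r)) ⊗ₖ Matrix.diagonal lam) *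
            (Matrix.diagonal ω ⊗ₖ (1 : Matrix (Fin M) (Fin M) ℂ))
        - s • (Matrix.diagonal ω ⊗ₖ (1 : Matrix (Fin M) (Fin M) ℂ)))
      = Matrix.blockDiagonal (fun m => (1 : Matrix (Fin N) (Fin N) ℂ) - s • Matrix.diagonal ω
          - lam m • (Matrix.vecMulVec h (fun r => starRingEnd ℂ (h r)) *
              Matrix.diagonal ω)) from ?_, Matrix.det_blockDiagonal]
  rw [← Matrix.mul_kronecker_mul, Matrix.mul_one]
  ext ⟨p, q⟩ ⟨r, q'⟩
  by_cases hq : q = q' <;>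
    simp [Matrix.blockDiagonal_apply, Matrix.one_apply, Matrix.kroneckerMap_apply,
      Matrix.diagonal_apply, Matrix.mul_apply, Matrix.vecMulVec_apply, hq, Prod.ext_iff,
      mul_comm, mul_assoc, mul_left_comm, sub_sub, add_comm]
end
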